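/- Let I ⊆ ℝ∖{0} be an open interval. (a) Let β ∈ ℂ be fixed, let A ⊆ ℝ be an open interval of parameter values α, and let u₁, u₂, v₁, v₂ : I × A → ℂ be twice continuously differentiable functions such that for each α ∈ A, the functions s ↦ uₖ(s,α), vₖ(s,α) satisfy the coupled Painlevé V system with parameters (α, β) on I. Then with H = H(s,α) the Hamiltonian, for all (s,α) ∈ I × A: ∂/∂α [u₁·∂v₁/∂s + u₂·∂v₂/∂s − H] = ∂/∂s [u₁·∂v₁/∂α + u₂·∂v₂/∂α] + (u₁(v₁²−1) + u₂(v₂²−1))/s. (b) Symmetrically, let α ∈ ℂ be fixed, let B ⊆ ℝ be an open interval of parameter values β, and let u₁, u₂, v₁, v₂ : I × B → ℂ be twice continuously differentiable such that for each β ∈ B the functions satisfy the coupled Painlevé V system with parameters (α, β) on I. Then for all (s,β) ∈ I × B: ∂/∂β [u₁·∂v₁/∂s + u₂·∂v₂/∂s − H] = ∂/∂s [u₁·∂v₁/∂β + u₂·∂v₂/∂β] + (u₁(v₁−1)² + u₂(v₂−1)²)/s. -/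

import Mathlib

/-!
Put `Φ = u₁ ∂ₛv₁ + u₂ ∂ₛv₂ − H` and `Ψ = u₁ ∂ₐv₁ + u₂ ∂ₐv₂`. Since the mixed partials of `v₁, v₂`
agree, `∂ₐΦ − ∂ₛΨ = Σₖ (∂ₐuₖ ∂ₛvₖ − ∂ₛuₖ ∂ₐvₖ) − ∂ₐH`. The system is Hamiltonian for
`s·H`: `s vₖ′ = ∂(sH)/∂uₖ` and `s uₖ′ = −∂(sH)/∂vₖ`, so in the chain rule for `∂ₐH` everything
cancels except the explicit dependence of `H` on the parameter,
`−∂H/∂α = (u₁(v₁²−1) + u₂(v₂²−1))/s` and `−∂H/∂β = (u₁(v₁−1)² + u₂(v₂−1)²)/s`.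
-/

open Complex Filter Topology MeasureTheory

/-- Right-hand side of the `u₁`-equation of the coupled Painlevé V system in
dimension four: `s·u₁′ = (s/2)u₁ − u₁²(v₁−1)(3v₁−1) − u₁u₂(v₂−1)(2v₁+v₂−1)
+ 2(α+β)u₁v₁ − 2βu₁`. -/
noncomputable def cpvRHSu₁ (α β s u₁ u₂ v₁ v₂ : ℂ) : ℂ :=
  (s / 2) * u₁ - u₁ ^ 2 * (v₁ - 1) * (3 * v₁ - 1)
    - u₁ * u₂ * (v₂ - 1) * (2 * v₁ + v₂ - 1) + 2 * (α + β) * u₁ * v₁ - 2 * β * u₁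

/-- Right-hand side of the `u₂`-equation of the coupled Painlevé V system. -/
noncomputable def cpvRHSu₂ (α β s u₁ u₂ v₁ v₂ : ℂ) : ℂ :=
  -(s / 2) * u₂ - u₂ ^ 2 * (v₂ - 1) * (3 * v₂ - 1)
    - u₁ * u₂ * (v₁ - 1) * (v₁ + 2 * v₂ - 1) + 2 * (α + β) * u₂ * v₂ - 2 * β * u₂

/-- Right-hand side of the `v₁`-equation of the coupled Painlevé V system. -/
noncomputable def cpvRHSv₁ (α β s u₁ u₂ v₁ v₂ : ℂ) : ℂ :=
  -(s / 2) * v₁ + 2 * u₁ * v₁ * (v₁ - 1) ^ 2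
    + u₂ * (v₁ + v₂) * (v₁ - 1) * (v₂ - 1) - α * (v₁ ^ 2 - 1) - β * (v₁ - 1) ^ 2

/-- Right-hand side of the `v₂`-equation of the coupled Painlevé V system. -/
noncomputable def cpvRHSv₂ (α β s u₁ u₂ v₁ v₂ : ℂ) : ℂ :=
  (s / 2) * v₂ + 2 * u₂ * v₂ * (v₂ - 1) ^ 2
    + u₁ * (v₁ + v₂) * (v₁ - 1) * (v₂ - 1) - α * (v₂ ^ 2 - 1) - β * (v₂ - 1) ^ 2

/-- `s·H` for the coupled Painlevé V system: `s·H = u₁²v₁(v₁−1)² + u₂²v₂(v₂−1)²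
− (s/2)(u₁v₁ − u₂v₂) − α(u₁(v₁²−1) + u₂(v₂²−1)) − β(u₁(v₁−1)² + u₂(v₂−1)²)
+ u₁u₂(v₁+v₂)(v₁−1)(v₂−1)`. -/
noncomputable def cpvSH (α β s u₁ u₂ v₁ v₂ : ℂ) : ℂ :=
  u₁ ^ 2 * v₁ * (v₁ - 1) ^ 2 + u₂ ^ 2 * v₂ * (v₂ - 1) ^ 2
    - (s / 2) * (u₁ * v₁ - u₂ * v₂)
    - α * (u₁ * (v₁ ^ 2 - 1) + u₂ * (v₂ ^ 2 - 1))
    - β * (u₁ * (v₁ - 1) ^ 2 + u₂ * (v₂ - 1) ^ 2)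
    + u₁ * u₂ * (v₁ + v₂) * (v₁ - 1) * (v₂ - 1)

/-- The Hamiltonian `H` of the coupled Painlevé V system, defined by `s·H = cpvSH`. -/
noncomputable def cpvH (α β s u₁ u₂ v₁ v₂ : ℂ) : ℂ := cpvSH α β s u₁ u₂ v₁ v₂ / s

/-- `(u₁, u₂, v₁, v₂)` is a solution of the coupled Painlevé V system in dimension
four with parameters `(α, β)` on a set `I ⊆ ℝ` of (nonzero) real values of `s`. -/
def IsCPVSolutionOn (α β : ℂ) (I : Set ℝ) (u₁ u₂ v₁ v₂ : ℝ → ℂ) : Prop :=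
  ∀ s ∈ I,
    DifferentiableAt ℝ u₁ s ∧ DifferentiableAt ℝ u₂ s ∧
    DifferentiableAt ℝ v₁ s ∧ DifferentiableAt ℝ v₂ s ∧
    (s : ℂ) * deriv u₁ s = cpvRHSu₁ α β s (u₁ s) (u₂ s) (v₁ s) (v₂ s) ∧
    (s : ℂ) * deriv u₂ s = cpvRHSu₂ α β s (u₁ s) (u₂ s) (v₁ s) (v₂ s) ∧
    (s : ℂ) * deriv v₁ s = cpvRHSv₁ α β s (u₁ s) (u₂ s) (v₁ s) (v₂ s) ∧
    (s : ℂ) * deriv v₂ s = cpvRHSv₂ α β s (u₁ s) (u₂ s) (v₁ s) (v₂ s)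

/-- `(u₁, u₂, v₁, v₂)`, as functions of `t > 0`, form a solution of the coupled
Painlevé V system with parameters `(α, β)` on the negative imaginary ray
`s = −it`, `t > 0`, where `d/ds` is interpreted as `i·d/dt`. -/
def IsCPVSolutionNegIm (α β : ℂ) (u₁ u₂ v₁ v₂ : ℝ → ℂ) : Prop :=
  ∀ t : ℝ, 0 < t →
    DifferentiableAt ℝ u₁ t ∧ DifferentiableAt ℝ u₂ t ∧
    DifferentiableAt ℝ v₁ t ∧ DifferentiableAt ℝ v₂ t ∧
    (-Complex.I * t) * (Complex.I * deriv u₁ t)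
      = cpvRHSu₁ α β (-Complex.I * t) (u₁ t) (u₂ t) (v₁ t) (v₂ t) ∧
    (-Complex.I * t) * (Complex.I * deriv u₂ t)
      = cpvRHSu₂ α β (-Complex.I * t) (u₁ t) (u₂ t) (v₁ t) (v₂ t) ∧
    (-Complex.I * t) * (Complex.I * deriv v₁ t)
      = cpvRHSv₁ α β (-Complex.I * t) (u₁ t) (u₂ t) (v₁ t) (v₂ t) ∧
    (-Complex.I * t) * (Complex.I * deriv v₂ t)
      = cpvRHSv₂ α β (-Complex.I * t) (u₁ t) (u₂ t) (v₁ t) (v₂ t)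


section PartialDerivatives

variable {𝕜 E : Type*} [NontriviallyNormedField 𝕜] [NormedAddCommGroup E] [NormedSpace 𝕜 E]
  {F : 𝕜 × 𝕜 → E} {F' : 𝕜 × 𝕜 →L[𝕜] E} {x y : 𝕜}

theorem HasFDerivAt.hasDerivAt_partial_fst (hF : HasFDerivAt F F' (x, y)) :
    HasDerivAt (fun x' => F (x', y)) (F' (1, 0)) x :=
  hF.comp_hasDerivAt x ((hasDerivAt_id x).prodMk (hasDerivAt_const x y))

theorem HasFDerivAt.hasDerivAt_partial_snd (hF : HasFDerivAt F F' (x, y)) :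
    HasDerivAt (fun y' => F (x, y')) (F' (0, 1)) y :=
  hF.comp_hasDerivAt y ((hasDerivAt_const y x).prodMk (hasDerivAt_id y))

end PartialDerivatives

theorem ContDiffAt.exists_mixed_partials_eq {𝕜 E : Type*} [RCLike 𝕜]
    [NormedAddCommGroup E] [NormedSpace 𝕜 E] {f : 𝕜 → 𝕜 → E} {x y : 𝕜}
    (hf : ContDiffAt 𝕜 2 (fun p : 𝕜 × 𝕜 => f p.1 p.2) (x, y)) :
    ∃ m : E, HasDerivAt (fun y' => deriv (fun x' => f x' y') x) m y ∧
      HasDerivAt (fun x' => deriv (fun y' => f x' y') y) m x := by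
  set F := fun p : 𝕜 × 𝕜 => f p.1 p.2
  have hF : ∀ᶠ p in 𝓝 (x, y), HasFDerivAt F (fderiv 𝕜 F p) p :=
    (hf.eventually (by simp)).mono fun p hp => (hp.differentiableAt (by simp)).hasFDerivAt
  have hF' : HasFDerivAt (fderiv 𝕜 F) (fderiv 𝕜 (fderiv 𝕜 F) (x, y)) (x, y) :=
    ((hf.fderiv_right (m := 1) le_rfl).differentiableAt one_ne_zero).hasFDerivAt
  have hsymm := hf.isSymmSndFDerivAt (by simp)
  refine ⟨fderiv 𝕜 (fderiv 𝕜 F) (x, y) (0, 1) (1, 0), ?_, ?_⟩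
  · refine (hF'.hasDerivAt_partial_snd.clm_apply (hasDerivAt_const y ((1 : 𝕜), (0 : 𝕜))))
      |>.congr_deriv (by simp) |>.congr_of_eventuallyEq ?_
    have hy : ∀ᶠ y' in 𝓝 y, HasFDerivAt F (fderiv 𝕜 F (x, y')) (x, y') :=
      ((continuous_const.prodMk continuous_id).tendsto' y (x, y) rfl).eventually hF
    exact hy.mono fun y' hy' => hy'.hasDerivAt_partial_fst.deriv
  · rw [hsymm]
    refine (hF'.hasDerivAt_partial_fst.clm_apply (hasDerivAt_const x ((0 : 𝕜), (1 : 𝕜))))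
      |>.congr_deriv (by simp) |>.congr_of_eventuallyEq ?_
    have hx : ∀ᶠ x' in 𝓝 x, HasFDerivAt F (fderiv 𝕜 F (x', y)) (x', y) :=
      ((continuous_id.prodMk continuous_const).tendsto' x (x, y) rfl).eventually hF
    exact hx.mono fun x' hx' => hx'.hasDerivAt_partial_snd.deriv

theorem hasDerivAt_cpvSH {αf βf u₁ u₂ v₁ v₂ : ℝ → ℂ} {α' β' u₁' u₂' v₁' v₂' : ℂ} {a : ℝ}
    (s : ℂ) (hα : HasDerivAt αf α' a) (hβ : HasDerivAt βf β' a)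
    (hu₁ : HasDerivAt u₁ u₁' a) (hu₂ : HasDerivAt u₂ u₂' a)
    (hv₁ : HasDerivAt v₁ v₁' a) (hv₂ : HasDerivAt v₂ v₂' a) :
    HasDerivAt (fun a => cpvSH (αf a) (βf a) s (u₁ a) (u₂ a) (v₁ a) (v₂ a))
      (cpvRHSv₁ (αf a) (βf a) s (u₁ a) (u₂ a) (v₁ a) (v₂ a) * u₁'
        + cpvRHSv₂ (αf a) (βf a) s (u₁ a) (u₂ a) (v₁ a) (v₂ a) * u₂'
        - cpvRHSu₁ (αf a) (βf a) s (u₁ a) (u₂ a) (v₁ a) (v₂ a) * v₁'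
        - cpvRHSu₂ (αf a) (βf a) s (u₁ a) (u₂ a) (v₁ a) (v₂ a) * v₂'
        - α' * (u₁ a * (v₁ a ^ 2 - 1) + u₂ a * (v₂ a ^ 2 - 1))
        - β' * (u₁ a * (v₁ a - 1) ^ 2 + u₂ a * (v₂ a - 1) ^ 2)) a := by
  have h := (((((((hu₁.fun_pow 2).fun_mul hv₁).fun_mul ((hv₁.sub_const 1).fun_pow 2)).fun_add
      (((hu₂.fun_pow 2).fun_mul hv₂).fun_mul ((hv₂.sub_const 1).fun_pow 2))).fun_sub
      ((hasDerivAt_const a (s / 2)).fun_mul ((hu₁.fun_mul hv₁).fun_sub (hu₂.fun_mul hv₂)))).fun_sub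
      (hα.fun_mul ((hu₁.fun_mul ((hv₁.fun_pow 2).sub_const 1)).fun_add
        (hu₂.fun_mul ((hv₂.fun_pow 2).sub_const 1))))).fun_sub
      (hβ.fun_mul ((hu₁.fun_mul ((hv₁.sub_const 1).fun_pow 2)).fun_add
        (hu₂.fun_mul ((hv₂.sub_const 1).fun_pow 2))))).fun_add
      ((((hu₁.fun_mul hu₂).fun_mul (hv₁.fun_add hv₂)).fun_mul (hv₁.sub_const 1)).fun_mul
        (hv₂.sub_const 1))
  refine h.congr_deriv ?_
  simp only [cpvRHSu₁, cpvRHSu₂, cpvRHSv₁, cpvRHSv₂]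
  ring

theorem cpv_parameter_derivative_identity {I : Set ℝ} {u₁ u₂ v₁ v₂ : ℝ → ℝ → ℂ}
    {αf βf : ℝ → ℂ} {α' β' : ℂ} {s a : ℝ}
    (hu₁ : ContDiffAt ℝ 2 (fun p : ℝ × ℝ => u₁ p.1 p.2) (s, a))
    (hu₂ : ContDiffAt ℝ 2 (fun p : ℝ × ℝ => u₂ p.1 p.2) (s, a))
    (hv₁ : ContDiffAt ℝ 2 (fun p : ℝ × ℝ => v₁ p.1 p.2) (s, a))
    (hv₂ : ContDiffAt ℝ 2 (fun p : ℝ × ℝ => v₂ p.1 p.2) (s, a))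
    (hsol : IsCPVSolutionOn (αf a) (βf a) I
      (fun s' => u₁ s' a) (fun s' => u₂ s' a) (fun s' => v₁ s' a) (fun s' => v₂ s' a))
    (hs : s ∈ I) (hs₀ : s ≠ 0) (hα : HasDerivAt αf α' a) (hβ : HasDerivAt βf β' a) :
    deriv (fun a' : ℝ =>
        u₁ s a' * deriv (fun s' : ℝ => v₁ s' a') s
          + u₂ s a' * deriv (fun s' : ℝ => v₂ s' a') s
          - cpvH (αf a') (βf a') (s : ℂ) (u₁ s a') (u₂ s a') (v₁ s a') (v₂ s a')) a
      = deriv (fun s' : ℝ =>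
          u₁ s' a * deriv (fun a' : ℝ => v₁ s' a') a
            + u₂ s' a * deriv (fun a' : ℝ => v₂ s' a') a) s
        + (α' * (u₁ s a * (v₁ s a ^ 2 - 1) + u₂ s a * (v₂ s a ^ 2 - 1))
            + β' * (u₁ s a * (v₁ s a - 1) ^ 2 + u₂ s a * (v₂ s a - 1) ^ 2)) / (s : ℂ) := by
  have hderiv_a {f : ℝ → ℝ → ℂ} (hf : ContDiffAt ℝ 2 (fun p : ℝ × ℝ => f p.1 p.2) (s, a)) :
      HasDerivAt (fun a' => f s a') (deriv (fun a' => f s a') a) a :=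
    (hf.differentiableAt (by simp)).hasFDerivAt.hasDerivAt_partial_snd.differentiableAt.hasDerivAt
  obtain ⟨m₁, hm₁a, hm₁s⟩ := hv₁.exists_mixed_partials_eq
  obtain ⟨m₂, hm₂a, hm₂s⟩ := hv₂.exists_mixed_partials_eq
  obtain ⟨hdu₁, hdu₂, -, -, he₁, he₂, he₃, he₄⟩ := hsol s hs
  have hΦ := ((hderiv_a hu₁).fun_mul hm₁a).fun_add ((hderiv_a hu₂).fun_mul hm₂a) |>.fun_sub
    ((hasDerivAt_cpvSH (s : ℂ) hα hβ (hderiv_a hu₁) (hderiv_a hu₂) (hderiv_a hv₁)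
      (hderiv_a hv₂)).div_const (s : ℂ))
  have hΨ := (hdu₁.hasDerivAt.fun_mul hm₁s).fun_add (hdu₂.hasDerivAt.fun_mul hm₂s)
  have hs₀' : (s : ℂ) ≠ 0 := Complex.ofReal_ne_zero.2 hs₀
  rw [mul_comm, ← eq_div_iff hs₀'] at he₁ he₂ he₃ he₄
  simp only [cpvH]
  rw [hΦ.deriv, hΨ.deriv, he₁, he₂, he₃, he₄]
  ring

/-- Differential identities for the classical action of the coupled Painlevé V
system with respect to the parameters. (a) For a two-parameter-smooth family of
solutions depending on the parameter `α` (with `β` fixed),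
`∂/∂α[u₁ ∂v₁/∂s + u₂ ∂v₂/∂s − H] = ∂/∂s[u₁ ∂v₁/∂α + u₂ ∂v₂/∂α]
+ (u₁(v₁²−1) + u₂(v₂²−1))/s`; (b) symmetrically for the parameter `β` (with `α`
fixed), with extra term `(u₁(v₁−1)² + u₂(v₂−1)²)/s`. -/
theorem cpv_action_parameter_differential_identities :
    (∀ (β : ℂ) (I A : Set ℝ), IsOpen I → I.OrdConnected → (0 : ℝ) ∉ I →
      IsOpen A → A.OrdConnected →
      ∀ u₁ u₂ v₁ v₂ : ℝ → ℝ → ℂ,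
      ContDiffOn ℝ 2 (fun p : ℝ × ℝ => u₁ p.1 p.2) (I ×ˢ A) →
      ContDiffOn ℝ 2 (fun p : ℝ × ℝ => u₂ p.1 p.2) (I ×ˢ A) →
      ContDiffOn ℝ 2 (fun p : ℝ × ℝ => v₁ p.1 p.2) (I ×ˢ A) →
      ContDiffOn ℝ 2 (fun p : ℝ × ℝ => v₂ p.1 p.2) (I ×ˢ A) →
      (∀ a ∈ A, IsCPVSolutionOn (a : ℂ) β I
        (fun s => u₁ s a) (fun s => u₂ s a) (fun s => v₁ s a) (fun s => v₂ s a)) →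
      ∀ s ∈ I, ∀ a ∈ A,
        deriv (fun a' : ℝ =>
            u₁ s a' * deriv (fun s' : ℝ => v₁ s' a') s
              + u₂ s a' * deriv (fun s' : ℝ => v₂ s' a') s
              - cpvH (a' : ℂ) β (s : ℂ) (u₁ s a') (u₂ s a') (v₁ s a') (v₂ s a')) a
          = deriv (fun s' : ℝ =>
              u₁ s' a * deriv (fun a' : ℝ => v₁ s' a') a
                + u₂ s' a * deriv (fun a' : ℝ => v₂ s' a') a) s
            + (u₁ s a * ((v₁ s a) ^ 2 - 1) + u₂ s a * ((v₂ s a) ^ 2 - 1))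
                / (s : ℂ)) ∧
    (∀ (α : ℂ) (I B : Set ℝ), IsOpen I → I.OrdConnected → (0 : ℝ) ∉ I →
      IsOpen B → B.OrdConnected →
      ∀ u₁ u₂ v₁ v₂ : ℝ → ℝ → ℂ,
      ContDiffOn ℝ 2 (fun p : ℝ × ℝ => u₁ p.1 p.2) (I ×ˢ B) →
      ContDiffOn ℝ 2 (fun p : ℝ × ℝ => u₂ p.1 p.2) (I ×ˢ B) →
      ContDiffOn ℝ 2 (fun p : ℝ × ℝ => v₁ p.1 p.2) (I ×ˢ B) →
      ContDiffOn ℝ 2 (fun p : ℝ × ℝ => v₂ p.1 p.2) (I ×ˢ B) →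
      (∀ b ∈ B, IsCPVSolutionOn α (b : ℂ) I
        (fun s => u₁ s b) (fun s => u₂ s b) (fun s => v₁ s b) (fun s => v₂ s b)) →
      ∀ s ∈ I, ∀ b ∈ B,
        deriv (fun b' : ℝ =>
            u₁ s b' * deriv (fun s' : ℝ => v₁ s' b') s
              + u₂ s b' * deriv (fun s' : ℝ => v₂ s' b') s
              - cpvH α (b' : ℂ) (s : ℂ) (u₁ s b') (u₂ s b') (v₁ s b') (v₂ s b')) b
          = deriv (fun s' : ℝ =>
              u₁ s' b * deriv (fun b' : ℝ => v₁ s' b') b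
                + u₂ s' b * deriv (fun b' : ℝ => v₂ s' b') b) s
            + (u₁ s b * ((v₁ s b) - 1) ^ 2 + u₂ s b * ((v₂ s b) - 1) ^ 2)
                / (s : ℂ)) := by
  have hAt {I A : Set ℝ} (hI : IsOpen I) (hA : IsOpen A) {f : ℝ → ℝ → ℂ}
      (hf : ContDiffOn ℝ 2 (fun p : ℝ × ℝ => f p.1 p.2) (I ×ˢ A)) {s a : ℝ} (hs : s ∈ I)
      (ha : a ∈ A) : ContDiffAt ℝ 2 (fun p : ℝ × ℝ => f p.1 p.2) (s, a) :=
    hf.contDiffAt ((hI.prod hA).mem_nhds ⟨hs, ha⟩)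
  have hofReal (a : ℝ) : HasDerivAt (fun a' : ℝ => (a' : ℂ)) 1 a := by
    simpa using (hasDerivAt_id' a).ofReal_comp
  refine ⟨fun β I A hI _ hI0 hA _ u₁ u₂ v₁ v₂ hu₁ hu₂ hv₁ hv₂ hsol s hs a ha => ?_,
    fun α I B hI _ hI0 hB _ u₁ u₂ v₁ v₂ hu₁ hu₂ hv₁ hv₂ hsol s hs b hb => ?_⟩
  · rw [cpv_parameter_derivative_identity (αf := fun a' => (a' : ℂ)) (βf := fun _ => β)
      (hAt hI hA hu₁ hs ha) (hAt hI hA hu₂ hs ha) (hAt hI hA hv₁ hs ha) (hAt hI hA hv₂ hs ha)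
      (hsol a ha) hs (ne_of_mem_of_not_mem hs hI0)
      (hofReal a) (hasDerivAt_const a β)]
    ring
  · rw [cpv_parameter_derivative_identity (αf := fun _ => α) (βf := fun b' => (b' : ℂ))
      (hAt hI hB hu₁ hs hb) (hAt hI hB hu₂ hs hb) (hAt hI hB hv₁ hs hb) (hAt hI hB hv₂ hs hb)
      (hsol b hb) hs (ne_of_mem_of_not_mem hs hI0)
      (hasDerivAt_const b α) (hofReal b)]
    ring
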